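/- arXiv:2411.02981 — 5 statements merged into one kernel-verified Lean document; each statement's English description precedes it below -/
import Mathlib

section
/- Let A be a unital complex C*-algebra, x ∈ A self-adjoint, and δ > 0. Then the element [[s·1, x],[x, s·1]] of M₂(A) is invertible for every s ∈ (0, δ) if and only if the spectrum of x is contained in (−∞, −δ] ∪ {0} ∪ [δ, ∞). -/
open Matrix

lemma isUnit_diag_fin_two {A : Type*} [Ring A] (c d : A) :
    IsUnit !![c, 0; 0, d] ↔ IsUnit c ∧ IsUnit d := by
  constructor
  · rintro ⟨u, hu⟩
    set N : Matrix (Fin 2) (Fin 2) A := u.inv with hN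
    have h1 : !![c, 0; 0, d] * N = 1 := by rw [← hu, hN]; exact u.val_inv
    have h2 : N * !![c, 0; 0, d] = 1 := by rw [← hu, hN]; exact u.inv_val
    constructor
    · refine ⟨⟨c, N 0 0, ?_, ?_⟩, rfl⟩
      · have := congrFun (congrFun h1 0) 0
        simpa [Matrix.mul_apply, Fin.sum_univ_two] using this
      · have := congrFun (congrFun h2 0) 0
        simpa [Matrix.mul_apply, Fin.sum_univ_two] using this
    · refine ⟨⟨d, N 1 1, ?_, ?_⟩, rfl⟩
      · have := congrFun (congrFun h1 1) 1
        simpa [Matrix.mul_apply, Fin.sum_univ_two] using this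
      · have := congrFun (congrFun h2 1) 1
        simpa [Matrix.mul_apply, Fin.sum_univ_two] using this
  · rintro ⟨⟨u, hu⟩, ⟨v, hv⟩⟩
    refine ⟨⟨!![c, 0; 0, d], !![↑u⁻¹, 0; 0, ↑v⁻¹], ?_, ?_⟩, rfl⟩
    · rw [Matrix.mul_fin_two, Matrix.one_fin_two]
      simp [← hu, ← hv]
    · rw [Matrix.mul_fin_two, Matrix.one_fin_two]
      simp [← hu, ← hv]

lemma isUnit_symm_two {A : Type*} [Ring A] [Algebra ℂ A] (a b : A) :
    IsUnit !![a, b; b, a] ↔ IsUnit (a + b) ∧ IsUnit (a - b) := by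
  set U : Matrix (Fin 2) (Fin 2) A := !![1, 1; 1, -1] with hUdef
  have hU2 : U * U = (2 : ℂ) • 1 := by
    rw [hUdef, Matrix.mul_fin_two]
    ext i j
    fin_cases i <;> fin_cases j <;> simp [Matrix.one_fin_two] <;> ring_nf <;>
      simp [two_smul]
  have hUinv : U * ((2 : ℂ)⁻¹ • U) = 1 := by
    rw [Matrix.mul_smul, hU2, smul_smul, inv_mul_cancel₀ (by norm_num), one_smul]
  have hUinv' : ((2 : ℂ)⁻¹ • U) * U = 1 := by
    rw [Matrix.smul_mul, hU2, smul_smul, inv_mul_cancel₀ (by norm_num), one_smul]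
  set V : Matrix (Fin 2) (Fin 2) A := (2 : ℂ)⁻¹ • U with hVdef
  have key : U * !![a, b; b, a] * U =
      !![(a + b) * ((2 : ℂ) • 1), 0; 0, (a - b) * ((2 : ℂ) • 1)] := by
    rw [hUdef, Matrix.mul_fin_two, Matrix.mul_fin_two]
    ext i j
    fin_cases i <;> fin_cases j <;>
      simp [two_smul, mul_add, Algebra.mul_smul_comm, mul_one] <;> abel
  have h2u : IsUnit ((2 : ℂ) • (1 : A)) := by
    refine ⟨⟨(2 : ℂ) • 1, (2 : ℂ)⁻¹ • 1, ?_, ?_⟩, rfl⟩ <;>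
      simp [smul_smul]
  have hUisUnit : IsUnit U := ⟨⟨U, V, hUinv, hUinv'⟩, rfl⟩
  have hVisUnit : IsUnit V := ⟨⟨V, U, hUinv', hUinv⟩, rfl⟩
  have step1 : IsUnit !![a, b; b, a] ↔ IsUnit (U * !![a, b; b, a] * U) := by
    constructor
    · intro h
      exact (hUisUnit.mul h).mul hUisUnit
    · intro h
      have heq : !![a, b; b, a] = V * (U * !![a, b; b, a] * U) * V := by
        rw [show V * (U * !![a, b; b, a] * U) * V
            = (V * U) * (!![a, b; b, a] * (U * V)) by simp only [mul_assoc],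
          hUinv', hUinv, one_mul, mul_one]
      rw [heq]
      exact (hVisUnit.mul h).mul hVisUnit
  rw [step1, key, isUnit_diag_fin_two, ← h2u.unit_spec,
    Units.isUnit_mul_units, Units.isUnit_mul_units]

/-- For a self-adjoint `x` in a unital complex C*-algebra `A` and `δ > 0`, the matrix
`[[s·1, x], [x, s·1]]` in `M₂(A)` is invertible for every `s ∈ (0,δ)` iff the (real)
spectrum of `x` is contained in `(-∞,-δ] ∪ {0} ∪ [δ,∞)`. -/
theorem isUnit_shifted_selfAdjoint_iff_spectrum_gap {A : Type*} [CStarAlgebra A]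
    (x : A) (hx : IsSelfAdjoint x) (δ : ℝ) (hδ : 0 < δ) :
    (∀ s : ℝ, s ∈ Set.Ioo 0 δ →
        IsUnit !![(s : ℂ) • (1 : A), x; x, (s : ℂ) • (1 : A)]) ↔
      spectrum ℂ x ⊆ Complex.ofReal '' (Set.Iic (-δ) ∪ {0} ∪ Set.Ici δ) := by
  have key : ∀ s : ℝ, IsUnit !![(s : ℂ) • (1 : A), x; x, (s : ℂ) • (1 : A)] ↔
      ((-s : ℝ) : ℂ) ∉ spectrum ℂ x ∧ ((s : ℝ) : ℂ) ∉ spectrum ℂ x := by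
    intro s
    rw [isUnit_symm_two]
    have h1 : ((s : ℂ) • (1 : A) + x) = -(algebraMap ℂ A ((-s : ℝ) : ℂ) - x) := by
      rw [Algebra.algebraMap_eq_smul_one]
      push_cast
      rw [neg_smul]
      abel
    have h2 : ((s : ℂ) • (1 : A) - x) = -(x - algebraMap ℂ A ((s : ℝ) : ℂ)) := by
      rw [Algebra.algebraMap_eq_smul_one]
      abel
    rw [h1, h2, IsUnit.neg_iff, IsUnit.neg_iff, ← IsUnit.neg_iff (x - _), neg_sub,
      ← spectrum.notMem_iff, ← spectrum.notMem_iff]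
  constructor
  · intro h z hz
    obtain ⟨r, hr⟩ : ∃ r : ℝ, z = (r : ℂ) := ⟨z.re, hx.mem_spectrum_eq_re hz⟩
    subst hr
    refine ⟨r, ?_, rfl⟩
    by_contra hr'
    simp only [Set.mem_union, Set.mem_Iic, Set.mem_singleton_iff, Set.mem_Ici, not_or] at hr'
    obtain ⟨⟨h1, h2⟩, h3⟩ := hr'
    push_neg at h1 h3
    rcases lt_trichotomy r 0 with hlt | heq | hgt
    · have := ((key (-r)).mp (h (-r) ⟨by linarith, by linarith⟩)).1
      push_cast at this
      simp only [neg_neg] at this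
      exact this hz
    · exact h2 heq
    · exact ((key r).mp (h r ⟨hgt, h3⟩)).2 hz
  · intro h s hs
    rw [key]
    constructor
    · intro hmem
      obtain ⟨r, hr, hre⟩ := h hmem
      have : r = -s := by exact_mod_cast hre
      subst this
      rcases hr with (h1 | h2) | h3
      · rw [Set.mem_Iic] at h1; linarith [hs.1, hs.2]
      · simp only [Set.mem_singleton_iff] at h2; linarith [hs.1]
      · rw [Set.mem_Ici] at h3; linarith [hs.1]
    · intro hmem
      obtain ⟨r, hr, hre⟩ := h hmem
      have : r = s := by exact_mod_cast hre
      subst this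
      rcases hr with (h1 | h2) | h3
      · rw [Set.mem_Iic] at h1; linarith [hs.1]
      · simp only [Set.mem_singleton_iff] at h2; linarith [hs.1]
      · rw [Set.mem_Ici] at h3; linarith [hs.2]
end

section
/- Let H be a complex Hilbert space, T a bounded operator on H, and g > 0 with T*T ≥ g²·1 and TT* ≥ g²·1. Let P be an orthogonal projection on H (P = P* = P²), set η = ‖PT − TP‖ and x = PTP. Then x*x ≥ (g² − η²)·P and xx* ≥ (g² − η²)·P in the ordering of bounded self-adjoint operators on H. -/
/-!
With `q = 1 - p`, splitting `a⋆a = a⋆(p + q)a` gives `(pap)⋆(pap) = p(a⋆a)p - (qap)⋆(qap)`.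
Compressing `a⋆a ≥ c` by `p` bounds the first term below by `c p`, and since
`qap = -(pa - ap)p`, the second is at most `‖pa - ap‖² p`. Applying this to `a⋆` gives the
bound for `(pap)(pap)⋆`.
-/

namespace IsStarProjection

section Ring

variable {A : Type*} [Ring A] [StarRing A] {p : A}

theorem star_conj_mul_conj_eq (hp : IsStarProjection p) (a : A) :
    star (p * a * p) * (p * a * p)
      = p * (star a * a) * p - star ((p * a - a * p) * p) * ((p * a - a * p) * p) := by
  have hpp : ∀ x : A, p * (p * x) = p * x := fun x => by rw [← mul_assoc, hp.isIdempotentElem.eq]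
  simp only [star_mul, star_sub, hp.isSelfAdjoint.star_eq, mul_sub, sub_mul, mul_assoc, hpp,
    hp.isIdempotentElem.eq]
  abel

theorem conj_smul_one {R : Type*} [CommSemiring R] [Algebra R A] (hp : IsStarProjection p)
    (z : R) : star p * (z • 1) * p = z • p := by
  rw [hp.isSelfAdjoint.star_eq, mul_smul_comm, mul_one, smul_mul_assoc, hp.isIdempotentElem.eq]

end Ring

variable {A : Type*} [CStarAlgebra A] [PartialOrder A] [StarOrderedRing A] {p : A}

theorem smul_le_conj (hp : IsStarProjection p) {c : ℂ} {b : A} (hb : c • 1 ≤ b) :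
    c • p ≤ p * b * p := by
  have h := star_left_conjugate_le_conjugate hb p
  rwa [hp.conj_smul_one, hp.isSelfAdjoint.star_eq] at h

theorem star_mul_self_mul_le (hp : IsStarProjection p) (d : A) :
    star (d * p) * (d * p) ≤ ((‖d‖ ^ 2 : ℝ) : ℂ) • p :=
  calc star (d * p) * (d * p) = star p * (star d * d) * p := by
        simp only [star_mul, mul_assoc]
    _ ≤ star p * algebraMap ℝ A (‖d‖ ^ 2) * p :=
        star_left_conjugate_le_conjugate CStarAlgebra.star_mul_le_algebraMap_norm_sq p
    _ = _ := by rw [Algebra.algebraMap_eq_smul_one, ← Complex.coe_smul, hp.conj_smul_one]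

theorem smul_le_star_conj_mul_conj (hp : IsStarProjection p) {a : A} {c : ℝ}
    (ha : (c : ℂ) • 1 ≤ star a * a) :
    (((c - ‖p * a - a * p‖ ^ 2 : ℝ)) : ℂ) • p ≤ star (p * a * p) * (p * a * p) := by
  rw [hp.star_conj_mul_conj_eq, Complex.ofReal_sub, sub_smul]
  exact sub_le_sub (hp.smul_le_conj ha) (hp.star_mul_self_mul_le _)

theorem smul_le_conj_mul_star_conj (hp : IsStarProjection p) {a : A} {c : ℝ}
    (ha : (c : ℂ) • 1 ≤ a * star a) :
    (((c - ‖p * a - a * p‖ ^ 2 : ℝ)) : ℂ) • p ≤ (p * a * p) * star (p * a * p) := by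
  have h := hp.smul_le_star_conj_mul_conj (a := star a) (by rwa [star_star])
  have hstar : star (p * a * p) = p * star a * p := by
    simp only [star_mul, hp.isSelfAdjoint.star_eq, mul_assoc]
  have hnorm : ‖p * star a - star a * p‖ = ‖p * a - a * p‖ := by
    rw [← norm_star, star_sub, star_mul, star_mul, star_star, hp.isSelfAdjoint.star_eq, ← norm_neg,
      neg_sub]
  rwa [hnorm, ← hstar, star_star] at h

end IsStarProjection

theorem compression_lower_bound_general {H : Type*} [NormedAddCommGroup H]
    [InnerProductSpace ℂ H] [CompleteSpace H]
    (T : H →L[ℂ] H) (g : ℝ)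
    (hT1 : (star T * T - ((g ^ 2 : ℝ) : ℂ) • (1 : H →L[ℂ] H)).IsPositive)
    (hT2 : (T * star T - ((g ^ 2 : ℝ) : ℂ) • (1 : H →L[ℂ] H)).IsPositive)
    (P : H →L[ℂ] H) (hP1 : IsSelfAdjoint P) (hP2 : P * P = P) :
    (star (P * T * P) * (P * T * P)
        - (((g ^ 2 - ‖P * T - T * P‖ ^ 2 : ℝ)) : ℂ) • P).IsPositive ∧
      ((P * T * P) * star (P * T * P)
        - (((g ^ 2 - ‖P * T - T * P‖ ^ 2 : ℝ)) : ℂ) • P).IsPositive := by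
  have hP : IsStarProjection P := ⟨hP2, hP1⟩
  -- `S ≤ R` is by definition `(R - S).IsPositive` in the Loewner order on `H →L[ℂ] H`.
  exact ⟨hP.smul_le_star_conj_mul_conj hT1, hP.smul_le_conj_mul_star_conj hT2⟩

/-- If `T` is a bounded operator on a complex Hilbert space with `T*T ≥ g²·1` and
`TT* ≥ g²·1` for some `g > 0`, and `P` is an orthogonal projection with
`η = ‖PT - TP‖` and `x = PTP`, then `x*x ≥ (g² - η²)·P` and `xx* ≥ (g² - η²)·P`
in the ordering of bounded self-adjoint operators (`S ≥ R` iff `S - R` is positive). -/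
theorem compression_lower_bound {H : Type*} [NormedAddCommGroup H]
    [InnerProductSpace ℂ H] [CompleteSpace H]
    (T : H →L[ℂ] H) (g : ℝ) (hg : 0 < g)
    (hT1 : (star T * T - ((g ^ 2 : ℝ) : ℂ) • (1 : H →L[ℂ] H)).IsPositive)
    (hT2 : (T * star T - ((g ^ 2 : ℝ) : ℂ) • (1 : H →L[ℂ] H)).IsPositive)
    (P : H →L[ℂ] H) (hP1 : IsSelfAdjoint P) (hP2 : P * P = P) :
    (star (P * T * P) * (P * T * P)
        - (((g ^ 2 - ‖P * T - T * P‖ ^ 2 : ℝ)) : ℂ) • P).IsPositive ∧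
      ((P * T * P) * star (P * T * P)
        - (((g ^ 2 - ‖P * T - T * P‖ ^ 2 : ℝ)) : ℂ) • P).IsPositive :=
  compression_lower_bound_general T g hT1 hT2 P hP1 hP2
end

section
/- Let D, x ∈ Mₖ(ℂ) with D hermitian, let s ∈ ℝ, g ≥ 0, κ ≥ 0, and suppose that ([[s·1, x],[x*, s·1]])² ≥ g²·1 in the Loewner order on M_{2k}(ℂ). Then the generalized spectral localizer satisfies L_κ(D,x,s)² ≥ (g² − κ·‖[D,x]‖)·1 in the Loewner order on M_{4k}(ℂ). -/
/-! With `H = [[s, x], [x*, s]]` and `K = κ · diag(D, D)` the localizer is `[[H, K], [K, -H]]`,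
whose square is `diag(H² + K², H² + K²) + [[0, X], [X*, 0]]` with `X = [H, K]`. The last summand
is hermitian of norm at most `‖X‖ ≤ κ‖[D, x]‖`, so it is `≥ -κ‖[D, x]‖`; meanwhile `K² ≥ 0` and
`H² ≥ g²` by hypothesis. -/

open Matrix
open scoped Matrix.Norms.L2Operator ComplexOrder

/-- The generalized spectral localizer `L_κ(D,x,s)`: the hermitian `4k × 4k` complex
matrix with `k × k` blocks
`[[s·1, x, κD, 0], [x*, s·1, 0, κD], [κD, 0, -s·1, -x], [0, κD, -x*, -s·1]]`. -/
noncomputable def localizer {k : ℕ} (D x : Matrix (Fin k) (Fin k) ℂ) (κ s : ℝ) :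
    Matrix ((Fin k ⊕ Fin k) ⊕ (Fin k ⊕ Fin k)) ((Fin k ⊕ Fin k) ⊕ (Fin k ⊕ Fin k)) ℂ :=
  Matrix.fromBlocks
    (Matrix.fromBlocks ((s : ℂ) • 1) x xᴴ ((s : ℂ) • 1))
    (Matrix.fromBlocks ((κ : ℂ) • D) 0 0 ((κ : ℂ) • D))
    (Matrix.fromBlocks ((κ : ℂ) • D) 0 0 ((κ : ℂ) • D))
    (Matrix.fromBlocks (-(s : ℂ) • 1) (-x) (-xᴴ) (-(s : ℂ) • 1))

lemma EuclideanSpace.norm_sq_toLp_sumElim {𝕜 l m : Type*} [RCLike 𝕜] [Fintype l] [Fintype m]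
    (a : l → 𝕜) (b : m → 𝕜) :
    ‖WithLp.toLp 2 (Sum.elim a b)‖ ^ 2 = ‖WithLp.toLp 2 a‖ ^ 2 + ‖WithLp.toLp 2 b‖ ^ 2 := by
  simp only [EuclideanSpace.norm_sq_eq, Fintype.sum_sum_type]
  rfl

namespace Matrix

variable {𝕜 : Type*} [RCLike 𝕜]

lemma l2_opNorm_fromBlocks_zero₁₁_zero₂₂_le {l m n o : Type*} [Fintype l] [Fintype m]
    [Fintype n] [Fintype o] [DecidableEq l] [DecidableEq m] (B : Matrix n m 𝕜)
    (C : Matrix o l 𝕜) :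
    ‖fromBlocks (0 : Matrix n l 𝕜) B C (0 : Matrix o m 𝕜)‖ ≤ max ‖B‖ ‖C‖ := by
  set c := max ‖B‖ ‖C‖
  rw [l2_opNorm_def]
  refine ContinuousLinearMap.opNorm_le_bound _ (by positivity) fun z => ?_
  obtain ⟨z, rfl⟩ := WithLp.toLp_surjective 2 z
  rw [← Sum.elim_comp_inl_inr z]
  set u := z ∘ Sum.inl
  set v := z ∘ Sum.inr
  have hB : ‖WithLp.toLp 2 (B *ᵥ v)‖ ≤ c * ‖WithLp.toLp 2 v‖ :=
    (l2_opNorm_mulVec B (WithLp.toLp 2 v)).trans (by gcongr; exact le_max_left _ _)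
  have hC : ‖WithLp.toLp 2 (C *ᵥ u)‖ ≤ c * ‖WithLp.toLp 2 u‖ :=
    (l2_opNorm_mulVec C (WithLp.toLp 2 u)).trans (by gcongr; exact le_max_right _ _)
  refine le_of_sq_le_sq ?_ (by positivity)
  simp only [LinearEquiv.trans_apply, LinearMap.coe_toContinuousLinearMap', toLpLin_toLp,
    toLin'_apply, fromBlocks_mulVec, zero_mulVec, zero_add, add_zero]
  calc ‖WithLp.toLp 2 (B *ᵥ v ⊕ᵥ C *ᵥ u)‖ ^ 2
      = ‖WithLp.toLp 2 (B *ᵥ v)‖ ^ 2 + ‖WithLp.toLp 2 (C *ᵥ u)‖ ^ 2 :=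
        EuclideanSpace.norm_sq_toLp_sumElim _ _
    _ ≤ (c * ‖WithLp.toLp 2 v‖) ^ 2 + (c * ‖WithLp.toLp 2 u‖) ^ 2 := by gcongr
    _ = (c * ‖WithLp.toLp 2 (u ⊕ᵥ v)‖) ^ 2 := by
        simp only [mul_pow, EuclideanSpace.norm_sq_toLp_sumElim]; ring

lemma PosSemidef.fromBlocks_zero₁₂_zero₂₁ {m n : Type*} [Fintype m] [Fintype n]
    {A : Matrix m m 𝕜} {B : Matrix n n 𝕜} (hA : A.PosSemidef) (hB : B.PosSemidef) :
    (fromBlocks A 0 0 B).PosSemidef := by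
  refine .of_dotProduct_mulVec_nonneg ?_ fun z => ?_
  · simp [IsHermitian, fromBlocks_conjTranspose, hA.1.eq, hB.1.eq]
  · rw [← Sum.elim_comp_inl_inr z, fromBlocks_mulVec, Function.star_sumElim,
      sumElim_dotProduct_sumElim]
    simp only [zero_mulVec, add_zero, zero_add, Sum.elim_comp_inl, Sum.elim_comp_inr]
    exact add_nonneg (hA.dotProduct_mulVec_nonneg _) (hB.dotProduct_mulVec_nonneg _)

lemma l2_opNorm_commutator_fromBlocks_le {n : Type*} [Fintype n] [DecidableEq n]
    {D : Matrix n n 𝕜} (hD : D.IsHermitian) (x : Matrix n n 𝕜) (s : 𝕜) :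
    ‖fromBlocks (s • 1) x xᴴ (s • 1) * fromBlocks D 0 0 D
      - fromBlocks D 0 0 D * fromBlocks (s • 1) x xᴴ (s • 1)‖ ≤ ‖D * x - x * D‖ := by
  have hcomm : fromBlocks (s • 1) x xᴴ (s • 1) * fromBlocks D 0 0 D
      - fromBlocks D 0 0 D * fromBlocks (s • 1) x xᴴ (s • 1)
        = fromBlocks 0 (-(D * x - x * D)) (D * x - x * D)ᴴ 0 := by
    simp only [sub_eq_iff_eq_add, fromBlocks_multiply, fromBlocks_add, conjTranspose_sub,
      conjTranspose_mul, hD.eq, fromBlocks_inj]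
    refine ⟨?_, ?_, ?_, ?_⟩ <;>
      simp only [Matrix.smul_mul, Matrix.mul_smul, Matrix.one_mul, Matrix.mul_one,
        Matrix.mul_zero, Matrix.zero_mul, smul_zero, add_zero, zero_add] <;>
      abel
  rw [hcomm]
  refine (l2_opNorm_fromBlocks_zero₁₁_zero₂₂_le _ _).trans ?_
  rw [norm_neg, l2_opNorm_conjTranspose, max_self]

lemma sq_fromBlocks_self_neg {n α : Type*} [Fintype n] [DecidableEq n] [Ring α]
    (H K : Matrix n n α) :
    fromBlocks H K K (-H) ^ 2 =
      fromBlocks (H * H + K * K) (H * K - K * H) (K * H - H * K) (K * K + H * H) := by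
  rw [sq, fromBlocks_multiply]
  simp [sub_eq_add_neg]

lemma posSemidef_add_smul_one_of_l2_opNorm_le {ι : Type*} [Fintype ι] [DecidableEq ι]
    {N : Matrix ι ι ℂ} (hN : N.IsHermitian) {c : ℝ} (hc : ‖N‖ ≤ c) :
    (N + (c : ℂ) • 1).PosSemidef := by
  have hnorm : (N + (‖N‖ : ℂ) • 1).PosSemidef := by
    open scoped MatrixOrder in
    simpa [le_iff, Algebra.algebraMap_eq_smul_one, Complex.coe_smul] using
      IsSelfAdjoint.neg_algebraMap_norm_le_self hN
  have hgap : (((c - ‖N‖ : ℝ) : ℂ) • (1 : Matrix ι ι ℂ)).PosSemidef :=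
    PosSemidef.one.smul (by simpa using hc)
  convert hnorm.add hgap using 1
  push_cast
  module

lemma PosSemidef.sq_fromBlocks_self_neg_sub {n : Type*} [Fintype n] [DecidableEq n]
    {H K : Matrix n n ℂ} {a b : ℝ} (hHa : (H ^ 2 - (a : ℂ) • 1).PosSemidef)
    (hH : H.IsHermitian) (hK : K.IsHermitian) (hb : ‖H * K - K * H‖ ≤ b) :
    (fromBlocks H K K (-H) ^ 2 - ((a - b : ℝ) : ℂ) • 1).PosSemidef := by
  set X := H * K - K * H
  have hXadj : Xᴴ = K * H - H * K := by
    simp only [X, conjTranspose_sub, conjTranspose_mul, hH.eq, hK.eq]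
  have hsplit : fromBlocks H K K (-H) ^ 2 - ((a - b : ℝ) : ℂ) • 1 =
      fromBlocks (H ^ 2 - (a : ℂ) • 1) 0 0 (H ^ 2 - (a : ℂ) • 1)
        + fromBlocks (Kᴴ * K) 0 0 (Kᴴ * K) + (fromBlocks 0 X Xᴴ 0 + (b : ℂ) • 1) := by
    rw [sub_eq_iff_eq_add, sq_fromBlocks_self_neg, hXadj, hK.eq, ← fromBlocks_one,
      fromBlocks_smul, fromBlocks_smul]
    simp only [fromBlocks_add, smul_zero, add_zero, zero_add, fromBlocks_inj]
    refine ⟨?_, rfl, trivial, ?_⟩ <;>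
    · rw [sq]; push_cast; module
  have hKK := posSemidef_conjTranspose_mul_self K
  have hXb : ‖fromBlocks 0 X Xᴴ 0‖ ≤ b := by
    calc ‖fromBlocks 0 X Xᴴ 0‖ ≤ max ‖X‖ ‖Xᴴ‖ := l2_opNorm_fromBlocks_zero₁₁_zero₂₂_le X Xᴴ
      _ ≤ b := by rw [l2_opNorm_conjTranspose, max_self]; exact hb
  rw [hsplit]
  exact ((hHa.fromBlocks_zero₁₂_zero₂₁ hHa).add (hKK.fromBlocks_zero₁₂_zero₂₁ hKK)).add
    (posSemidef_add_smul_one_of_l2_opNorm_le (isHermitian_zero.fromBlocks rfl isHermitian_zero) hXb)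

end Matrix

theorem localizer_sq_lower_bound_general {k : ℕ} (D x : Matrix (Fin k) (Fin k) ℂ)
    (hD : D.IsHermitian) (s : ℝ) (g : ℝ) (κ : ℝ) (hκ : 0 ≤ κ)
    (h : ((Matrix.fromBlocks ((s : ℂ) • 1) x xᴴ ((s : ℂ) • 1)) ^ 2
        - ((g ^ 2 : ℝ) : ℂ) • 1).PosSemidef) :
    ((localizer D x κ s) ^ 2
        - ((g ^ 2 - κ * ‖D * x - x * D‖ : ℝ) : ℂ) • 1).PosSemidef := by
  set H := fromBlocks ((s : ℂ) • 1) x xᴴ ((s : ℂ) • 1)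
  set K := fromBlocks ((κ : ℂ) • D) 0 0 ((κ : ℂ) • D)
  have hL : localizer D x κ s = fromBlocks H K K (-H) := by
    simp [localizer, H, K, fromBlocks_neg]
  have hκD : ((κ : ℂ) • D).IsHermitian := hD.smul (Complex.conj_ofReal κ)
  have hH : H.IsHermitian :=
    (isHermitian_one.smul (Complex.conj_ofReal s)).fromBlocks rfl
      (isHermitian_one.smul (Complex.conj_ofReal s))
  have hK : K.IsHermitian := hκD.fromBlocks conjTranspose_zero hκD
  have hcomm : ‖H * K - K * H‖ ≤ κ * ‖D * x - x * D‖ := by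
    have hκC : (κ : ℂ) • D * x - x * ((κ : ℂ) • D) = (κ : ℂ) • (D * x - x * D) := by
      rw [Matrix.smul_mul, Matrix.mul_smul, smul_sub]
    simpa only [hκC, norm_smul, Complex.norm_real, Real.norm_of_nonneg hκ] using
      l2_opNorm_commutator_fromBlocks_le hκD x s
  rw [hL]
  exact h.sq_fromBlocks_self_neg_sub hH hK hcomm

/-- If `([[s·1, x],[x*, s·1]])² ≥ g²·1` in the Loewner order, then
`L_κ(D,x,s)² ≥ (g² - κ·‖[D,x]‖)·1` in the Loewner order, where `‖·‖` is the
`ℓ²`-operator norm. -/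
theorem localizer_sq_lower_bound {k : ℕ} (D x : Matrix (Fin k) (Fin k) ℂ)
    (hD : D.IsHermitian) (s : ℝ) (g : ℝ) (hg : 0 ≤ g) (κ : ℝ) (hκ : 0 ≤ κ)
    (h : ((Matrix.fromBlocks ((s : ℂ) • 1) x xᴴ ((s : ℂ) • 1)) ^ 2
        - ((g ^ 2 : ℝ) : ℂ) • 1).PosSemidef) :
    ((localizer D x κ s) ^ 2
        - ((g ^ 2 - κ * ‖D * x - x * D‖ : ℝ) : ℂ) • 1).PosSemidef :=
  localizer_sq_lower_bound_general D x hD s g κ hκ h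
end

section
/- Let D ∈ Mₖ(ℂ) be hermitian, let 0 < s < 1, and let κ ∈ ℝ. Then the generalized spectral localizer L_κ(D, 1, s) ∈ M_{4k}(ℂ) (taking x equal to the identity matrix) is an invertible hermitian matrix that has exactly 2k positive eigenvalues and exactly 2k negative eigenvalues (counted with multiplicity); in particular its signature is zero. -/
/-!
Write `L = [[A, B], [B, -A]]` with `A = [[s, 1], [1, s]]` and `B = κD ⊕ κD`. Conjugating by
`[[0, 1], [-1, 0]]` turns `L` into `-L`, so `L` and `-L` have the same characteristic polynomial
and the eigenvalues of `L` are symmetric about `0`. Since `A` and `B` commute,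
`L² = (A² + B²) ⊕ (A² + B²)`, which is positive definite because `A` is invertible for `s² ≠ 1`.
So `0` is not an eigenvalue, and the `4k` eigenvalues split evenly between the two signs.
-/

open Matrix

open Polynomial Finset

namespace Matrix

section Spectrum
variable {𝕜 : Type*} [RCLike 𝕜] {n : Type*} [Fintype n] [DecidableEq n] {N : Matrix n n 𝕜}

lemma IsHermitian.roots_charpoly_neg (hN : N.IsHermitian) :
    (-N).charpoly.roots = univ.val.map fun i => (-(hN.eigenvalues i) : 𝕜) := by
  have hdiag : -N = (hN.eigenvectorUnitary : Matrix n n 𝕜) *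
      diagonal (fun i => (-(hN.eigenvalues i) : 𝕜)) *
      star (hN.eigenvectorUnitary : Matrix n n 𝕜) := by
    conv_lhs => rw [hN.spectral_theorem, Unitary.conjStarAlgAut_apply]
    simp [← diagonal_neg, Function.comp_def]
  rw [hdiag, charpoly_mul_comm, ← mul_assoc, Unitary.coe_star_mul_self, one_mul, charpoly_diagonal,
    roots_prod _ _ (prod_ne_zero_iff.2 fun i _ => X_sub_C_ne_zero _)]
  simp

lemma IsHermitian.map_neg_eigenvalues_eq (hN : N.IsHermitian)
    (hsymm : (-N).charpoly = N.charpoly) :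
    (univ.val.map hN.eigenvalues).map Neg.neg = univ.val.map hN.eigenvalues := by
  have h := hN.roots_charpoly_neg
  rw [hsymm, hN.roots_charpoly_eq_eigenvalues] at h
  apply Multiset.map_injective (RCLike.ofReal_injective (K := 𝕜))
  simpa [Multiset.map_map, Function.comp_def] using h.symm

lemma IsHermitian.card_eigenvalues_pos_eq_card_neg (hN : N.IsHermitian)
    (hsymm : (-N).charpoly = N.charpoly) :
    #{i | 0 < hN.eigenvalues i} = #{i | hN.eigenvalues i < 0} := by
  calc #{i | 0 < hN.eigenvalues i}
      = (univ.val.map hN.eigenvalues).countP (0 < ·) := (Multiset.countP_map ..).symm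
    _ = ((univ.val.map hN.eigenvalues).map Neg.neg).countP (0 < ·) := by
      rw [hN.map_neg_eigenvalues_eq hsymm]
    _ = #{i | hN.eigenvalues i < 0} := by
      simp only [Multiset.map_map, Multiset.countP_map, Function.comp_apply, neg_pos]
      rfl

lemma IsHermitian.card_eigenvalues_pos_add_card_neg (hN : N.IsHermitian) (hunit : IsUnit N) :
    #{i | 0 < hN.eigenvalues i} + #{i | hN.eigenvalues i < 0} = Fintype.card n := by
  have hne : ∀ i, hN.eigenvalues i ≠ 0 := by
    intro i hi
    have hdet := (isUnit_iff_isUnit_det N).1 hunit |>.ne_zero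
    rw [hN.det_eq_prod_eigenvalues] at hdet
    exact hdet (prod_eq_zero (mem_univ i) (by simp [hi]))
  rw [← card_univ, ← card_filter_add_card_filter_not (s := univ) (0 < hN.eigenvalues ·)]
  congr 2
  exact filter_congr fun i _ => by rw [not_lt, (hne i).le_iff_lt]

end Spectrum

section Blocks
variable {m : Type*}

lemma charpoly_neg_fromBlocks_neg [Fintype m] [DecidableEq m] {R : Type*} [CommRing R]
    (A B : Matrix m m R) :
    (-fromBlocks A B B (-A)).charpoly = (fromBlocks A B B (-A)).charpoly := by
  let J : Matrix (m ⊕ m) (m ⊕ m) R := fromBlocks 0 1 (-1) 0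
  let J' : Matrix (m ⊕ m) (m ⊕ m) R := fromBlocks 0 (-1) 1 0
  have hJ : J' * J = 1 := by simp [J, J', fromBlocks_multiply]
  have hconj : -fromBlocks A B B (-A) = J * (fromBlocks A B B (-A) * J') := by
    simp [J, J', fromBlocks_multiply, fromBlocks_neg]
  rw [hconj, charpoly_mul_comm, mul_assoc, hJ, mul_one]

lemma fromBlocks_neg_mul_self [Fintype m] {R : Type*} [Ring R] {A B : Matrix m m R}
    (hAB : Commute A B) :
    fromBlocks A B B (-A) * fromBlocks A B B (-A) =
      fromBlocks (A * A + B * B) 0 0 (A * A + B * B) := by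
  simp [fromBlocks_multiply, hAB.eq, add_comm]

open scoped ComplexOrder in
lemma isUnit_fromBlocks_neg [Fintype m] [DecidableEq m] {𝕜 : Type*} [RCLike 𝕜]
    {A B : Matrix m m 𝕜} (hA : A.IsHermitian) (hB : B.IsHermitian) (hAu : IsUnit A)
    (hAB : Commute A B) : IsUnit (fromBlocks A B B (-A)) := by
  have hpos : (A * A + B * B).PosDef := by
    simpa only [hA.eq, hB.eq] using
      (PosDef.conjTranspose_mul_self A (mulVec_injective_iff_isUnit.2 hAu)).add_posSemidef
        (posSemidef_conjTranspose_mul_self B)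
  refine isUnit_of_mul_isUnit_left (y := fromBlocks A B B (-A)) ?_
  rw [fromBlocks_neg_mul_self hAB, isUnit_fromBlocks_zero₁₂]
  exact ⟨hpos.isUnit, hpos.isUnit⟩

lemma isHermitian_fromBlocks_ofReal_smul_one [DecidableEq m] {𝕜 : Type*} [RCLike 𝕜]
    (x : Matrix m m 𝕜) (s : ℝ) : (fromBlocks ((s : 𝕜) • 1) x xᴴ ((s : 𝕜) • 1)).IsHermitian :=
  have h : ((s : 𝕜) • (1 : Matrix m m 𝕜)).IsHermitian :=
    isHermitian_one.smul (RCLike.conj_ofReal s)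
  h.fromBlocks rfl h

lemma IsHermitian.fromBlocks_ofReal_smul {𝕜 : Type*} [RCLike 𝕜] {D : Matrix m m 𝕜}
    (hD : D.IsHermitian) (κ : ℝ) :
    (Matrix.fromBlocks ((κ : 𝕜) • D) 0 0 ((κ : 𝕜) • D)).IsHermitian :=
  have h := hD.smul (RCLike.conj_ofReal κ)
  h.fromBlocks (by simp) h

lemma commute_fromBlocks_smul_one_one [Fintype m] [DecidableEq m] {R : Type*} [CommRing R]
    (c : R) (D : Matrix m m R) : Commute (fromBlocks (c • 1) 1 1 (c • 1)) (fromBlocks D 0 0 D) := by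
  simp [Commute, SemiconjBy, fromBlocks_multiply]

lemma isUnit_fromBlocks_smul_one_one [Fintype m] [DecidableEq m] {K : Type*} [Field K] {c : K}
    (hc : c ^ 2 ≠ 1) : IsUnit (fromBlocks (c • 1) 1 1 (c • 1) : Matrix (m ⊕ m) (m ⊕ m) K) := by
  have hprod : fromBlocks (c • 1) 1 1 (c • 1) * fromBlocks (c • 1) (-1) (-1) (c • 1) =
      (c ^ 2 - 1) • (1 : Matrix (m ⊕ m) (m ⊕ m) K) := by
    rw [fromBlocks_multiply, ← fromBlocks_one, fromBlocks_smul]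
    congr 1 <;> simp only [Matrix.mul_one, Matrix.mul_neg, Algebra.mul_smul_comm, smul_smul, sq,
      sub_smul, one_smul, neg_add_cancel, add_neg_cancel, smul_zero] <;> abel
  refine .of_mul_eq_one ((c ^ 2 - 1)⁻¹ • fromBlocks (c • 1) (-1) (-1) (c • 1)) ?_
  rw [Matrix.mul_smul, hprod, smul_smul, inv_mul_cancel₀ (sub_ne_zero.2 hc), one_smul]

end Blocks

end Matrix

lemma localizer_eq_fromBlocks {k : ℕ} (D x : Matrix (Fin k) (Fin k) ℂ) (κ s : ℝ) :
    localizer D x κ s =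
      fromBlocks (fromBlocks ((s : ℂ) • 1) x xᴴ ((s : ℂ) • 1))
        (fromBlocks ((κ : ℂ) • D) 0 0 ((κ : ℂ) • D)) (fromBlocks ((κ : ℂ) • D) 0 0 ((κ : ℂ) • D))
        (-fromBlocks ((s : ℂ) • 1) x xᴴ ((s : ℂ) • 1)) := by
  simp [localizer, fromBlocks_neg]

/-- For hermitian `D`, `0 < s < 1` and any `κ`, the localizer `L_κ(D,1,s)` is an
invertible hermitian matrix with exactly `2k` positive and `2k` negative eigenvalues
(with multiplicity); in particular its signature vanishes. -/
theorem localizer_identity_signature_zero {k : ℕ} (D : Matrix (Fin k) (Fin k) ℂ)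
    (hD : D.IsHermitian) (s : ℝ) (hs0 : 0 < s) (hs1 : s < 1) (κ : ℝ) :
    ∃ hL : (localizer D (1 : Matrix (Fin k) (Fin k) ℂ) κ s).IsHermitian,
      IsUnit (localizer D (1 : Matrix (Fin k) (Fin k) ℂ) κ s) ∧
      (Finset.univ.filter fun i => 0 < hL.eigenvalues i).card = 2 * k ∧
      (Finset.univ.filter fun i => hL.eigenvalues i < 0).card = 2 * k := by
  rw [localizer_eq_fromBlocks, conjTranspose_one]
  have hA := isHermitian_fromBlocks_ofReal_smul_one (1 : Matrix (Fin k) (Fin k) ℂ) s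
  rw [conjTranspose_one] at hA
  have hB := hD.fromBlocks_ofReal_smul κ
  have hAu : IsUnit (fromBlocks ((s : ℂ) • 1) 1 1 ((s : ℂ) • (1 : Matrix (Fin k) (Fin k) ℂ))) :=
    isUnit_fromBlocks_smul_one_one (by exact_mod_cast (by nlinarith : s ^ 2 < 1).ne)
  have hL := hA.fromBlocks hB.eq hA.neg
  have hLu := isUnit_fromBlocks_neg hA hB hAu (commute_fromBlocks_smul_one_one _ _)
  have hpn := hL.card_eigenvalues_pos_eq_card_neg (charpoly_neg_fromBlocks_neg _ _)
  have hsum := hL.card_eigenvalues_pos_add_card_neg hLu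
  simp only [Fintype.card_sum, Fintype.card_fin] at hsum
  exact ⟨hL, hLu, by omega, by omega⟩
end

section
/- Let s, κ, λ ∈ ℝ. The hermitian 4×4 matrix [[s, 1, κλ, 0],[1, s, 0, κλ],[κλ, 0, −s, −1],[0, κλ, −1, −s]] has spectrum equal to the set { √((1+s)² + κ²λ²), −√((1+s)² + κ²λ²), √((1−s)² + κ²λ²), −√((1−s)² + κ²λ²) }. -/
/-!
Writing the matrix in `2 × 2` blocks as `[[A, k], [k, -A]]` with `A = [[s, 1], [1, s]]` and
`k = κλ`, its square is `(A² + k²) ⊕ (A² + k²)`, and `A² + k²` has eigenvalues `(1 ± s)² + k²`.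
Accordingly the characteristic polynomial is `(X² - (1 + s)² - k²) (X² - (1 - s)² - k²)`, whose
complex roots are the four real square roots in the statement.
-/

open Polynomial

def basicLocalizer {R : Type*} [Ring R] (s k : R) : Matrix (Fin 4) (Fin 4) R :=
  !![s, 1, k, 0; 1, s, 0, k; k, 0, -s, -1; 0, k, -1, -s]

theorem charpoly_basicLocalizer {R : Type*} [CommRing R] (s k : R) :
    (basicLocalizer s k).charpoly =
      (X ^ 2 - C ((1 + s) ^ 2 + k ^ 2)) * (X ^ 2 - C ((1 - s) ^ 2 + k ^ 2)) := by
  simp [Matrix.charpoly, Matrix.charmatrix, basicLocalizer, Matrix.det_succ_row_zero,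
    Fin.sum_univ_succ, Fin.succAbove]
  ring

theorem Complex.sq_eq_ofReal_iff {x : ℝ} (hx : 0 ≤ x) {z : ℂ} :
    z ^ 2 = x ↔ z = √x ∨ z = -√x := by
  rw [← sq_eq_sq_iff_eq_or_eq_neg, ← Complex.ofReal_pow, Real.sq_sqrt hx]

/-- The hermitian `4 × 4` matrix `[[s, 1, κλ, 0], [1, s, 0, κλ], [κλ, 0, -s, -1],
[0, κλ, -1, -s]]` has spectrum `{±√((1+s)² + κ²λ²), ±√((1-s)² + κ²λ²)}`. -/
theorem spectrum_basic_localizer (s κ lam : ℝ) :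
    spectrum ℂ
        (!![(s : ℂ), 1, (κ * lam : ℝ), 0;
            1, (s : ℂ), 0, (κ * lam : ℝ);
            (κ * lam : ℝ), 0, (-s : ℝ), -1;
            0, (κ * lam : ℝ), -1, (-s : ℝ)] : Matrix (Fin 4) (Fin 4) ℂ)
      = {(Real.sqrt ((1 + s) ^ 2 + κ ^ 2 * lam ^ 2) : ℂ),
          (-Real.sqrt ((1 + s) ^ 2 + κ ^ 2 * lam ^ 2) : ℂ),
          (Real.sqrt ((1 - s) ^ 2 + κ ^ 2 * lam ^ 2) : ℂ),
          (-Real.sqrt ((1 - s) ^ 2 + κ ^ 2 * lam ^ 2) : ℂ)} := by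
  have hM : (!![(s : ℂ), 1, (κ * lam : ℝ), 0;
            1, (s : ℂ), 0, (κ * lam : ℝ);
            (κ * lam : ℝ), 0, (-s : ℝ), -1;
            0, (κ * lam : ℝ), -1, (-s : ℝ)] : Matrix (Fin 4) (Fin 4) ℂ) =
      (basicLocalizer s (κ * lam)).map Complex.ofRealHom := by
    ext i j
    fin_cases i <;> fin_cases j <;> simp [basicLocalizer]
  have hroot (t : ℝ) (μ : ℂ) : μ ^ 2 - ((t ^ 2 + (κ * lam) ^ 2 : ℝ) : ℂ) = 0 ↔
      μ = √(t ^ 2 + κ ^ 2 * lam ^ 2) ∨ μ = -√(t ^ 2 + κ ^ 2 * lam ^ 2) := by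
    rw [sub_eq_zero, Complex.sq_eq_ofReal_iff (by positivity), mul_pow]
  ext μ
  rw [hM, Matrix.mem_spectrum_iff_isRoot_charpoly, Matrix.charpoly_map, IsRoot, eval_map,
    charpoly_basicLocalizer]
  simp only [eval₂_mul, eval₂_sub, eval₂_X_pow, eval₂_C, Complex.ofRealHom_eq_coe, mul_eq_zero,
    hroot, Set.mem_insert_iff, Set.mem_singleton_iff, or_assoc]
end
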